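/- For nonnegative integers r, s, m, t with m ≥ r and t ≥ m: ∑_{j=0}^{min(r,s)} q^{(j-s)(j-r)} · C_q(r, j) · C_q(m−r, s−j) · C_q(t+j, m) = C_q(t, m−s) · C_q(t−m+s+r, s). -/

import Mathlib

open Finset

/-- The q-Pochhammer symbol `(a;q)_n = ∏_{j=0}^{n-1} (1 - a q^j)`. -/
noncomputable def qPoch (q a : RatFunc ℚ) (n : ℕ) : RatFunc ℚ :=
  ∏ j ∈ Finset.range n, (1 - a * q ^ j)

/-- The Gaussian (q-binomial) coefficient `C_q(m, k)`, defined as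
`(q;q)_m / ((q;q)_k (q;q)_{m-k})` for `0 ≤ k ≤ m`, and `0` otherwise. -/
noncomputable def qBinom (q : RatFunc ℚ) (m k : ℤ) : RatFunc ℚ :=
  if 0 ≤ k ∧ k ≤ m then
    qPoch q q m.toNat / (qPoch q q k.toNat * qPoch q q (m - k).toNat)
  else 0


/-!
Expand `C_q(t + j, m)` by the q-Vandermonde identity and apply the revision
`C_q(r, j) C_q(j, i) = C_q(r, i) C_q(r - i, j - i)`. After exchanging the two sums, the inner sum
over `j` is again a q-Vandermonde sum, equal to `q^((r-i)(s-i)) C_q(m - i, s - i)`. A second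
revision turns `C_q(t, m - i) C_q(m - i, s - i)` into `C_q(t, m - s) C_q(t - m + s, s - i)`, and the
remaining sum over `i` is a third q-Vandermonde sum, `C_q(t - m + s + r, s)`.
-/

open RatFunc

theorem qPoch_zero (q a : RatFunc ℚ) : qPoch q a 0 = 1 :=
  prod_range_zero _

theorem qPoch_succ (q a : RatFunc ℚ) (n : ℕ) :
    qPoch q a (n + 1) = qPoch q a n * (1 - a * q ^ n) :=
  prod_range_succ _ _

theorem one_sub_X_mul_X_pow_ne_zero (n : ℕ) : 1 - (X : RatFunc ℚ) * X ^ n ≠ 0 := by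
  rw [← pow_succ', sub_ne_zero, ← algebraMap_X, ← map_pow,
    ← map_one (algebraMap (Polynomial ℚ) (RatFunc ℚ)), Ne, (algebraMap_injective ℚ).eq_iff]
  exact fun h => by simpa using congrArg Polynomial.natDegree h

theorem qPoch_X_ne_zero (n : ℕ) : qPoch X X n ≠ 0 :=
  prod_ne_zero_iff.2 fun j _ => one_sub_X_mul_X_pow_ne_zero j

theorem qBinom_natCast (q : RatFunc ℚ) {n k : ℕ} (h : k ≤ n) :
    qBinom q n k = qPoch q q n / (qPoch q q k * qPoch q q (n - k)) := by
  rw [qBinom, if_pos (by omega)]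
  congr 3
  omega

theorem qBinom_eq_zero_of_neg (q : RatFunc ℚ) {n k : ℤ} (hk : k < 0) : qBinom q n k = 0 :=
  if_neg (by omega)

theorem qBinom_eq_zero_of_lt (q : RatFunc ℚ) {n k : ℤ} (h : n < k) : qBinom q n k = 0 :=
  if_neg (by omega)

theorem qBinom_sub (q : RatFunc ℚ) (n k : ℤ) : qBinom q n (n - k) = qBinom q n k := by
  unfold qBinom
  by_cases h : 0 ≤ k ∧ k ≤ n
  · rw [if_pos h, if_pos (by omega), sub_sub_cancel, mul_comm]
  · rw [if_neg h, if_neg (by omega)]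

theorem qBinom_X_zero_right (n : ℕ) : qBinom X n 0 = 1 := by
  have h := qBinom_natCast X (Nat.zero_le n)
  rwa [Nat.sub_zero, qPoch_zero, one_mul, div_self (qPoch_X_ne_zero n),
    Nat.cast_zero] at h

theorem qBinom_X_self (n : ℕ) : qBinom X n n = 1 := by
  simpa using qBinom_sub X n 0 ▸ qBinom_X_zero_right n

theorem qBinom_X_succ_left (n : ℕ) (k : ℤ) :
    qBinom X (n + 1) k = qBinom X n (k - 1) + X ^ k * qBinom X n k := by
  rcases lt_trichotomy k 0 with hk | rfl | hk
  · simp [qBinom_eq_zero_of_neg, hk, show k - 1 < 0 by omega]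
  · have h := qBinom_X_zero_right (n + 1)
    push_cast at h
    simp [h, qBinom_X_zero_right, qBinom_eq_zero_of_neg]
  obtain ⟨c, rfl⟩ : ∃ c : ℕ, k = c + 1 := ⟨(k - 1).toNat, by omega⟩
  rcases lt_trichotomy c n with hc | rfl | hc
  · obtain ⟨b, rfl⟩ : ∃ b, n = c + 1 + b := ⟨n - c - 1, by omega⟩
    have h := qBinom_natCast X (n := c + 1 + b + 1) (k := c + 1) (by omega)
    have h₁ := qBinom_natCast X (n := c + 1 + b) (k := c) (by omega)
    have h₂ := qBinom_natCast X (n := c + 1 + b) (k := c + 1) (by omega)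
    rw [show c + 1 + b + 1 - (c + 1) = b + 1 by omega] at h
    rw [show c + 1 + b - c = b + 1 by omega] at h₁
    rw [Nat.add_sub_cancel_left] at h₂
    push_cast at h h₁ h₂ ⊢
    -- cleared of denominators: `1 - q^(c+b+2) = (1 - q^(c+1)) + q^(c+1) (1 - q^(b+1))`
    rw [add_sub_cancel_right, h, h₁, h₂, qPoch_succ _ _ (c + 1 + b), qPoch_succ _ _ c,
      qPoch_succ _ _ b, zpow_add_one₀ X_ne_zero, zpow_natCast]
    have := qPoch_X_ne_zero c
    have := qPoch_X_ne_zero b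
    have := one_sub_X_mul_X_pow_ne_zero c
    have := one_sub_X_mul_X_pow_ne_zero b
    field_simp
    ring
  · have h := qBinom_X_self (c + 1)
    push_cast at h
    simp [h, qBinom_X_self, qBinom_eq_zero_of_lt]
  · simp [qBinom_eq_zero_of_lt, show (n : ℤ) < c by omega, show (n : ℤ) + 1 < c + 1 by omega,
      show (n : ℤ) < c + 1 by omega]

theorem qBinom_X_add_eq_sum (a b : ℕ) (k : ℤ) :
    qBinom X (a + b) k =
      ∑ j ∈ range (a + 1), X ^ ((a - j) * (k - j) : ℤ) * qBinom X a j * qBinom X b (k - j) := by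
  induction a generalizing k with
  | zero => simp [show qBinom X 0 0 = 1 by simpa using qBinom_X_zero_right 0]
  | succ a ih =>
    have h₁ : ∑ j ∈ range (a + 2),
          X ^ ((a + 1 - j) * (k - j) : ℤ) * qBinom X a (j - 1) * qBinom X b (k - j) =
        ∑ j ∈ range (a + 1),
          X ^ ((a - j) * (k - 1 - j) : ℤ) * qBinom X a j * qBinom X b (k - 1 - j) := by
      rw [sum_range_succ', Nat.cast_zero, zero_sub, qBinom_eq_zero_of_neg X (by norm_num),
        mul_zero, zero_mul, add_zero]
      refine sum_congr rfl fun j _ => ?_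
      push_cast
      ring_nf
    have h₂ : ∑ j ∈ range (a + 2),
          X ^ ((a + 1 - j) * (k - j) : ℤ) * (X ^ (j : ℤ) * qBinom X a j) * qBinom X b (k - j) =
        X ^ k * ∑ j ∈ range (a + 1),
          X ^ ((a - j) * (k - j) : ℤ) * qBinom X a j * qBinom X b (k - j) := by
      rw [sum_range_succ, qBinom_eq_zero_of_lt X (by simp), mul_zero, mul_zero, zero_mul, add_zero,
        mul_sum]
      refine sum_congr rfl fun j _ => ?_
      rw [← mul_assoc, ← zpow_add₀ X_ne_zero,
        show ((a + 1 - j) * (k - j) + j : ℤ) = k + (a - j) * (k - j) by ring, zpow_add₀ X_ne_zero]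
      ring
    have hpascal := qBinom_X_succ_left (a + b) k
    push_cast at hpascal ⊢
    rw [add_right_comm, hpascal, ih, ih, ← h₁, ← h₂, ← sum_add_distrib]
    refine sum_congr rfl fun j _ => ?_
    rw [qBinom_X_succ_left a]
    ring

theorem qBinom_X_add_eq_sum' (a b : ℕ) (k : ℤ) :
    qBinom X (a + b) k =
      ∑ j ∈ range (a + 1), X ^ (j * (b - k + j) : ℤ) * qBinom X a j * qBinom X b (k - j) := by
  rw [← qBinom_sub, qBinom_X_add_eq_sum, ← sum_range_reflect]
  refine sum_congr rfl fun j hj => ?_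
  rw [mem_range] at hj
  rw [show ((a + 1 - 1 - j : ℕ) : ℤ) = a - j by omega, ← qBinom_sub X a j,
    ← qBinom_sub X b (k - j)]
  ring_nf

theorem qBinom_X_mul_qBinom_X (n k l : ℤ) :
    qBinom X n k * qBinom X k l = qBinom X n l * qBinom X (n - l) (k - l) := by
  rcases lt_or_ge l 0 with hl | hl
  · rw [qBinom_eq_zero_of_neg X hl, qBinom_eq_zero_of_neg X hl, mul_zero, zero_mul]
  rcases lt_or_ge k l with hlk | hlk
  · rw [qBinom_eq_zero_of_lt X hlk, qBinom_eq_zero_of_neg X (sub_neg.2 hlk), mul_zero, mul_zero]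
  rcases lt_or_ge n k with hkn | hkn
  · rw [qBinom_eq_zero_of_lt X hkn, qBinom_eq_zero_of_lt X (sub_lt_sub_right hkn l), zero_mul,
      mul_zero]
  lift l to ℕ using hl
  lift k to ℕ using by omega
  lift n to ℕ using by omega
  norm_cast at hlk hkn
  rw [← Nat.cast_sub hlk, ← Nat.cast_sub (hlk.trans hkn), qBinom_natCast X hkn,
    qBinom_natCast X hlk, qBinom_natCast X (hlk.trans hkn),
    qBinom_natCast X (Nat.sub_le_sub_right hkn l),
    Nat.sub_sub_sub_cancel_right hlk]
  have := qPoch_X_ne_zero k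
  have := qPoch_X_ne_zero (n - l)
  field_simp

theorem sum_range_eq_sum_range_of_eq_zero {M : Type*} [AddCommMonoid M] {f : ℕ → M} {a b : ℕ}
    (hab : a ≤ b) (hf : ∀ j, a ≤ j → j < b → f j = 0) :
    ∑ j ∈ range a, f j = ∑ j ∈ range b, f j :=
  sum_subset (range_subset_range.2 hab) fun j hb ha => hf j (by simpa using ha) (by simpa using hb)

theorem sum_X_zpow_mul_qBinom_X_sub_mul_qBinom_X (r m i : ℕ) (s : ℤ) (hi : i ≤ r)
    (hrm : r ≤ m) :
    ∑ j ∈ range (r + 1), X ^ ((j - s) * (j - r) + (j - i) * (m - i) : ℤ) *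
        qBinom X (r - i) (j - i) * qBinom X (m - r) (s - j) =
      X ^ ((r - i) * (s - i) : ℤ) * qBinom X (m - i) (s - i) := by
  rw [show r + 1 = i + (r - i + 1) by omega, sum_range_add,
    sum_eq_zero fun j hj => by
      rw [qBinom_eq_zero_of_neg X (by simpa using hj), mul_zero, zero_mul],
    zero_add, show (m : ℤ) - i = (r - i : ℕ) + (m - r : ℕ) by omega, qBinom_X_add_eq_sum',
    mul_sum]
  refine sum_congr rfl fun l _ => ?_
  rw [← mul_assoc, ← mul_assoc, ← zpow_add₀ X_ne_zero]
  push_cast [hi, hrm]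
  ring_nf

theorem sum_X_zpow_mul_qBinom_X_mul_qBinom_X_add (r s m t : ℕ) (hrm : r ≤ m) :
    ∑ j ∈ range (r + 1), X ^ ((j - s) * (j - r) : ℤ) *
        qBinom X r j * qBinom X (m - r) (s - j) * qBinom X (t + j) m =
      ∑ i ∈ range (r + 1), X ^ ((r - i) * (s - i) : ℤ) *
        qBinom X r i * qBinom X t (m - i) * qBinom X (m - i) (s - i) := by
  have expand : ∀ j ∈ range (r + 1), qBinom X (t + j) m =
      ∑ i ∈ range (r + 1), X ^ ((j - i) * (m - i) : ℤ) * qBinom X j i * qBinom X t (m - i) := by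
    intro j hj
    rw [add_comm, qBinom_X_add_eq_sum]
    exact sum_range_eq_sum_range_of_eq_zero (by simpa using hj) fun i hi _ => by
      rw [qBinom_eq_zero_of_lt X (by omega), mul_zero, zero_mul]
  calc _ = ∑ i ∈ range (r + 1), qBinom X r i * qBinom X t (m - i) *
        ∑ j ∈ range (r + 1), X ^ ((j - s) * (j - r) + (j - i) * (m - i) : ℤ) *
          qBinom X (r - i) (j - i) * qBinom X (m - r) (s - j) := by
        rw [sum_congr rfl fun j hj => by rw [expand j hj, mul_sum], sum_comm]
        refine sum_congr rfl fun i _ => ?_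
        rw [mul_sum]
        refine sum_congr rfl fun j _ => ?_
        rw [zpow_add₀ X_ne_zero]
        linear_combination (X ^ ((j - s) * (j - r) : ℤ) * X ^ ((j - i) * (m - i) : ℤ) *
          qBinom X (m - r) (s - j) * qBinom X t (m - i)) * qBinom_X_mul_qBinom_X r j i
    _ = _ := by
        refine sum_congr rfl fun i hi => ?_
        rw [sum_X_zpow_mul_qBinom_X_sub_mul_qBinom_X r m i s (by simpa [Nat.lt_succ_iff] using hi)
          hrm]
        ring

theorem q_takacs (r s m t : ℕ) (hmr : r ≤ m) (htm : m ≤ t) :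
    ∑ j ∈ Finset.range (min r s + 1),
      (RatFunc.X : RatFunc ℚ) ^ (((j : ℤ) - s) * ((j : ℤ) - r)) *
        qBinom RatFunc.X (r : ℤ) (j : ℤ) *
        qBinom RatFunc.X ((m : ℤ) - r) ((s : ℤ) - j) *
        qBinom RatFunc.X ((t : ℤ) + j) (m : ℤ)
    = qBinom RatFunc.X (t : ℤ) ((m : ℤ) - s) *
        qBinom RatFunc.X ((t : ℤ) - m + s + r) (s : ℤ) := by
  have hrevision (i : ℕ) : qBinom X t (m - i) * qBinom X (m - i) (s - i) =
      qBinom X t (m - s) * qBinom X (t - m + s) (s - i) := by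
    rw [← qBinom_sub X (m - i), qBinom_X_mul_qBinom_X]
    ring_nf
  calc _ = ∑ j ∈ range (r + 1), X ^ ((j - s) * (j - r) : ℤ) *
          qBinom X r j * qBinom X (m - r) (s - j) * qBinom X (t + j) m :=
        sum_range_eq_sum_range_of_eq_zero (by omega) fun j hj _ => by
          rw [qBinom_eq_zero_of_neg X (n := m - r) (k := s - j) (by omega), mul_zero, zero_mul]
    _ = qBinom X t (m - s) * ∑ i ∈ range (r + 1), X ^ ((r - i) * (s - i) : ℤ) *
          qBinom X r i * qBinom X (t - m + s) (s - i) := by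
        rw [sum_X_zpow_mul_qBinom_X_mul_qBinom_X_add r s m t hmr, mul_sum]
        refine sum_congr rfl fun i _ => ?_
        rw [mul_assoc _ (qBinom X t _), hrevision]
        ring
    _ = _ := by
        rw [show (t : ℤ) - m + s + r = r + (t - m + s : ℕ) by omega, qBinom_X_add_eq_sum]
        push_cast [htm]
        rfl
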